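/- arXiv:2409.14641 — 2 statements merged into one kernel-verified Lean document; each statement's English description precedes it below -/
import Mathlib

section
/- Let m ≥ 1 and k ≥ 0 be integers. The composition operator C on L²(μ) is k-quasi-m-isometric if and only if for every x ∈ X the sequence (h_{n+k}(x))_{n∈ℤ₊} is a polynomial in n of degree at most m−1. -/
open MeasureTheory Finset

noncomputable section

/-- A real sequence indexed by the nonnegative integers is a polynomial in `n` of degree
at most `d` if some real polynomial of degree at most `d` interpolates it. -/
def IsPolySeq (d : ℕ) (γ : ℕ → ℝ) : Prop :=
  ∃ q : Polynomial ℝ, q.natDegree ≤ d ∧ ∀ n : ℕ, q.eval (n : ℝ) = γ n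

/-- `B_m(T) = ∑_{j=0}^m (-1)^j C(m,j) T*^{m-j} T^{m-j}`. -/
def BmOp {H : Type*} [NormedAddCommGroup H] [InnerProductSpace ℂ H] [CompleteSpace H]
    (m : ℕ) (T : H →L[ℂ] H) : H →L[ℂ] H :=
  ∑ j ∈ Finset.range (m + 1), ((-1 : ℂ) ^ j * (m.choose j : ℂ)) •
    ((ContinuousLinearMap.adjoint T) ^ (m - j) * T ^ (m - j))

/-- `T` is a `k`-quasi-`m`-isometry, i.e. `T*^k B_m(T) T^k = 0`. -/
def IsQuasiIso {H : Type*} [NormedAddCommGroup H] [InnerProductSpace ℂ H] [CompleteSpace H]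
    (k m : ℕ) (T : H →L[ℂ] H) : Prop :=
  (ContinuousLinearMap.adjoint T) ^ k * BmOp m T * T ^ k = 0

/-- The Radon–Nikodym derivative `h_p` of `μ ∘ φ^{-p}` with respect to `μ` in the discrete
setting: `h_p(x) = μ(φ^{-p}({x}))/μ({x})`. -/
def hRN {X : Type*} [MeasurableSpace X] (μ : Measure X) (φ : X → X) (p : ℕ) (x : X) : ℝ :=
  (μ ((φ^[p]) ⁻¹' {x})).toReal / (μ {x}).toReal

/-!
Expanding `B_m(T)` binomially, `⟪T*^k B_m(T) T^k f, f⟫` is the `m`-th forward difference at `0`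
of `n ↦ ‖T^(n+k) f‖²`, so by complex polarization `T` is `k`-quasi-`m`-isometric iff all these
sequences have vanishing `m`-th differences. For the composition operator,
`‖C^p f‖² = ∑_y |f y|² μ{y} h_p(y)`, so each such sequence is a nonnegative combination of the
sequences `n ↦ h_(n+k)(y)`, and testing on the indicator of `{x}` isolates a single one. Newton's
forward-difference formula identifies the sequences with vanishing `m`-th difference as the
polynomial sequences of degree at most `m - 1`.
-/

open Polynomial fwdDiff
open scoped ENNReal

theorem HasSum.fwdDiff_iter {ι M G : Type*} [AddCommMonoid M] [AddCommGroup G]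
    [TopologicalSpace G] [IsTopologicalAddGroup G] (h : M) {a : ι → M → G} {γ : M → G}
    (ha : ∀ y, HasSum (fun i => a i y) (γ y)) (n : ℕ) (y : M) :
    HasSum (fun i => (Δ_[h])^[n] (a i) y) ((Δ_[h])^[n] γ y) := by
  induction n generalizing a γ with
  | zero => exact ha y
  | succ n ih => exact ih fun y => (ha (y + h)).sub (ha y)

theorem fwdDiff_iter_const_mul {M R : Type*} [AddCommMonoid M] [Ring R] (h : M) (c : R)
    (f : M → R) (n : ℕ) : (Δ_[h])^[n] (fun y => c * f y) = c • (Δ_[h])^[n] f :=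
  fwdDiff_iter_const_smul h c f n

theorem Polynomial.fwdDiff_iter_eval_natCast {R : Type*} [CommRing R] (q : R[X]) (m n : ℕ) :
    (Δ_[1])^[m] (fun n : ℕ => q.eval (n : R)) n = (Δ_[1])^[m] q.eval (n : R) := by
  simp [fwdDiff_iter_eq_sum_shift]

theorem sum_range_choose_mul_fwdDiff_iter_of_fwdDiff_iter_eq_zero {G : Type*} [AddCommGroup G]
    {d : ℕ} {γ : ℕ → G} (hγ : (Δ_[1])^[d + 1] γ = 0) (n : ℕ) :
    ∑ k ∈ range (d + 1), n.choose k • (Δ_[1])^[k] γ 0 = γ n := by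
  have hvanish : ∀ k, d + 1 ≤ k → (Δ_[1])^[k] γ 0 = 0 := fun k hk => by
    obtain ⟨j, rfl⟩ := Nat.exists_eq_add_of_le' hk
    rw [Function.iterate_add_apply, hγ]
    simp [fwdDiff_iter_eq_sum_shift]
  calc ∑ k ∈ range (d + 1), n.choose k • (Δ_[1])^[k] γ 0
      = ∑ k ∈ range (n + d + 1), n.choose k • (Δ_[1])^[k] γ 0 :=
        sum_subset (range_subset_range.mpr (by omega)) fun k _ hk => by
          rw [hvanish k (by simpa using hk), smul_zero]
    _ = ∑ k ∈ range (n + 1), n.choose k • (Δ_[1])^[k] γ 0 :=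
        (sum_subset (range_subset_range.mpr (by omega)) fun k _ hk => by
          rw [Nat.choose_eq_zero_of_lt (by simpa using hk), zero_smul]).symm
    _ = γ n := by simpa using (shift_eq_sum_fwdDiff_iter 1 γ n 0).symm

theorem isPolySeq_iff_fwdDiff_iter_eq_zero (d : ℕ) (γ : ℕ → ℝ) :
    IsPolySeq d γ ↔ (Δ_[1])^[d + 1] γ = 0 := by
  constructor
  · rintro ⟨q, hq, hqγ⟩
    funext n
    rw [← funext hqγ, q.fwdDiff_iter_eval_natCast,
      Polynomial.fwdDiff_iter_eq_zero_of_degree_lt (Nat.lt_succ_of_le hq)]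
    rfl
  · intro hγ
    refine ⟨∑ k ∈ range (d + 1), C ((Δ_[1])^[k] γ 0 / k.factorial) * descPochhammer ℝ k, ?_,
      fun n => ?_⟩
    · refine natDegree_sum_le_of_forall_le _ _ fun k hk => (natDegree_C_mul_le _ _).trans ?_
      rw [descPochhammer_natDegree]
      exact Nat.lt_succ_iff.mp (mem_range.mp hk)
    · rw [← sum_range_choose_mul_fwdDiff_iter_of_fwdDiff_iter_eq_zero hγ n, eval_finsetSum]
      refine sum_congr rfl fun k _ => ?_
      rw [eval_mul, eval_C, descPochhammer_eval_eq_descFactorial,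
        Nat.descFactorial_eq_factorial_mul_choose, nsmul_eq_mul]
      push_cast
      field_simp

section QuasiIsometry

variable {H : Type*} [NormedAddCommGroup H] [InnerProductSpace ℂ H] [CompleteSpace H]

open ContinuousLinearMap

theorem ContinuousLinearMap.adjoint_pow (T : H →L[ℂ] H) (p : ℕ) :
    adjoint T ^ p = adjoint (T ^ p) := by
  simp only [← star_eq_adjoint, star_pow]

theorem inner_adjoint_pow_mul_pow_apply_self (T : H →L[ℂ] H) (p : ℕ) (g : H) :
    inner ℂ ((adjoint T ^ p * T ^ p) g) g = ((‖(T ^ p) g‖ ^ 2 : ℝ) : ℂ) := by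
  rw [mul_apply_eq_comp, adjoint_pow, adjoint_inner_left, inner_self_eq_norm_sq_to_K]
  push_cast
  rfl

theorem inner_BmOp_apply_self (m : ℕ) (T : H →L[ℂ] H) (g : H) :
    inner ℂ (BmOp m T g) g = (((Δ_[1])^[m] (fun n => ‖(T ^ n) g‖ ^ 2) 0 : ℝ) : ℂ) := by
  rw [BmOp, _root_.sum_apply, sum_inner, fwdDiff_iter_eq_sum_shift, ← sum_range_reflect,
    Complex.ofReal_sum]
  refine sum_congr rfl fun j hj => ?_
  have hj : j ≤ m := Nat.lt_succ_iff.mp (mem_range.mp hj)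
  rw [smul_apply, inner_smul_left, inner_adjoint_pow_mul_pow_apply_self,
    show m + 1 - 1 - j = m - j by omega, show m - (m - j) = j by omega, Nat.choose_symm hj]
  simp

theorem isQuasiIso_iff_fwdDiff_iter_norm_sq_eq_zero (k m : ℕ) (T : H →L[ℂ] H) :
    IsQuasiIso k m T ↔ ∀ f : H, (Δ_[1])^[m] (fun n => ‖(T ^ (n + k)) f‖ ^ 2) = 0 := by
  have hinner : ∀ f : H, inner ℂ ((adjoint T ^ k * BmOp m T * T ^ k) f) f =
      (((Δ_[1])^[m] (fun n => ‖(T ^ (n + k)) f‖ ^ 2) 0 : ℝ) : ℂ) := fun f => by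
    rw [mul_apply_eq_comp, mul_apply_eq_comp, adjoint_pow, adjoint_inner_left,
      inner_BmOp_apply_self]
    simp only [← mul_apply_eq_comp, ← pow_add]
  have hshift : ∀ (f : H) (n : ℕ), (Δ_[1])^[m] (fun p => ‖(T ^ (p + k)) f‖ ^ 2) n =
      (Δ_[1])^[m] (fun p => ‖(T ^ (p + k)) ((T ^ n) f)‖ ^ 2) 0 := fun f n => by
    rw [← zero_add n, ← fwdDiff_iter_comp_add]
    simp only [zero_add, ← mul_apply_eq_comp, ← pow_add, add_right_comm]
  rw [IsQuasiIso, ← ContinuousLinearMap.coe_inj, ContinuousLinearMap.toLinearMap_zero,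
    ← inner_map_self_eq_zero]
  simp only [coe_coe, hinner, Complex.ofReal_eq_zero]
  exact ⟨fun h f => funext fun n => (hshift f n).trans (h _), fun h f => congrFun (h f) 0⟩

end QuasiIsometry

theorem Filter.EventuallyEq.eq_of_forall_measure_singleton_ne_zero {X E : Type*}
    [MeasurableSpace X] [Countable X] {μ : Measure X} (hμ : ∀ x, μ {x} ≠ 0) {f g : X → E}
    (h : f =ᵐ[μ] g) : f = g :=
  funext fun x => ae_iff_of_countable.mp h x (hμ x)

theorem lintegral_comp_eq_tsum_mul_measure_preimage {X Y : Type*} [MeasurableSpace X]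
    [MeasurableSingletonClass X] [Countable X] [MeasurableSpace Y] [MeasurableSingletonClass Y]
    [Countable Y] (μ : Measure X) (ψ : X → Y) (F : Y → ℝ≥0∞) :
    ∫⁻ x, F (ψ x) ∂μ = ∑' y, F y * μ (ψ ⁻¹' {y}) := by
  rw [← lintegral_map .of_discrete .of_discrete, lintegral_countable']
  simp only [Measure.map_apply .of_discrete (measurableSet_singleton _)]

theorem eLpNorm_two_sq_eq_lintegral {X E : Type*} [MeasurableSpace X] {μ : Measure X}
    [NormedAddCommGroup E] (f : X → E) :
    eLpNorm f 2 μ ^ 2 = ∫⁻ x, ‖f x‖ₑ ^ 2 ∂μ := by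
  simpa using eLpNorm_nnreal_pow_eq_lintegral (f := f) (μ := μ) (p := 2) two_ne_zero

theorem measureReal_singleton_mul_hRN {X : Type*} [MeasurableSpace X] (ν : Measure X)
    (φ : X → X) (p : ℕ) {x : X} (hν : ν.real {x} ≠ 0) :
    ν.real {x} * hRN ν φ p x = ν.real (φ^[p] ⁻¹' {x}) :=
  mul_div_cancel₀ _ hν

section CompositionOperator

variable {X : Type*} [MeasurableSpace X] [Countable X]
  {μ : Measure X} {φ : X → X} {C : Lp ℂ 2 μ →L[ℂ] Lp ℂ 2 μ}

theorem coeFn_pow_apply_eq_comp_iterate (hμ : ∀ x, μ {x} ≠ 0)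
    (hC : ∀ f : Lp ℂ 2 μ, (C f : X → ℂ) =ᵐ[μ] fun x => f (φ x)) (p : ℕ) (f : Lp ℂ 2 μ) :
    ((C ^ p) f : X → ℂ) = fun x => f (φ^[p] x) := by
  induction p with
  | zero => rfl
  | succ p ih =>
    funext x
    rw [pow_succ', mul_apply_eq_comp, (hC _).eq_of_forall_measure_singleton_ne_zero hμ, ih,
      Function.iterate_succ_apply]

theorem hasSum_norm_sq_mul_hRN [MeasurableSingletonClass X] (hμ : ∀ x, μ {x} ≠ 0)
    (hμ' : ∀ x, μ {x} ≠ ∞) (hC : ∀ f : Lp ℂ 2 μ, (C f : X → ℂ) =ᵐ[μ] fun x => f (φ x))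
    (p : ℕ) (f : Lp ℂ 2 μ) :
    HasSum (fun y => (‖f y‖ ^ 2 * μ.real {y}) * hRN μ φ p y) (‖(C ^ p) f‖ ^ 2) := by
  have hsq : eLpNorm ((C ^ p) f) 2 μ ^ 2 = ∑' y, ‖f y‖ₑ ^ 2 * μ (φ^[p] ⁻¹' {y}) := by
    rw [eLpNorm_two_sq_eq_lintegral, coeFn_pow_apply_eq_comp_iterate hμ hC]
    exact lintegral_comp_eq_tsum_mul_measure_preimage μ (φ^[p]) fun y => ‖f y‖ₑ ^ 2
  have hfin : ∑' y, ‖f y‖ₑ ^ 2 * μ (φ^[p] ⁻¹' {y}) ≠ ∞ :=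
    hsq ▸ ENNReal.pow_ne_top (Lp.eLpNorm_ne_top _)
  rw [Lp.norm_def, ← ENNReal.toReal_pow, hsq,
    ENNReal.tsum_toReal_eq (ENNReal.ne_top_of_tsum_ne_top hfin)]
  convert ENNReal.hasSum_toReal hfin using 2 with y
  rw [mul_assoc, measureReal_singleton_mul_hRN μ φ p (ENNReal.toReal_ne_zero.mpr ⟨hμ y, hμ' y⟩),
    ENNReal.toReal_mul, ENNReal.toReal_pow, toReal_enorm]
  rfl

theorem norm_pow_apply_indicatorConstLp_sq [MeasurableSingletonClass X] (hμ : ∀ x, μ {x} ≠ 0)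
    (hμ' : ∀ x, μ {x} ≠ ∞) (hC : ∀ f : Lp ℂ 2 μ, (C f : X → ℂ) =ᵐ[μ] fun x => f (φ x))
    (p : ℕ) (x : X) :
    ‖(C ^ p) (indicatorConstLp 2 (measurableSet_singleton x) (hμ' x) (1 : ℂ))‖ ^ 2 =
      μ.real {x} * hRN μ φ p x := by
  classical
  refine (hasSum_norm_sq_mul_hRN hμ hμ' hC p _).unique ?_
  convert hasSum_ite_eq x (μ.real {x} * hRN μ φ p x) using 2 with y
  rw [indicatorConstLp_coeFn.eq_of_forall_measure_singleton_ne_zero hμ]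
  by_cases hy : y = x <;> simp [hy]

end CompositionOperator

theorem stmt2_general
    (X : Type*) [MeasurableSpace X] [Countable X]
    (hmeas : ∀ s : Set X, MeasurableSet s)
    (φ : X → X)
    (μ : Measure X)
    (hμ : ∀ x : X, 0 < μ {x} ∧ μ {x} < ⊤)
    (C : Lp ℂ 2 μ →L[ℂ] Lp ℂ 2 μ)
    (hC : ∀ f : Lp ℂ 2 μ, (C f : X → ℂ) =ᵐ[μ] fun x => f (φ x))
    (m k : ℕ) (hm : 1 ≤ m) :
    IsQuasiIso k m C ↔
      ∀ x : X, IsPolySeq (m - 1) (fun n => hRN μ φ (n + k) x) := by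
  have : MeasurableSingletonClass X := ⟨fun x => hmeas {x}⟩
  have hμ0 : ∀ x, μ {x} ≠ 0 := fun x => (hμ x).1.ne'
  have hμ' : ∀ x, μ {x} ≠ ∞ := fun x => (hμ x).2.ne
  obtain ⟨d, rfl⟩ := Nat.exists_eq_add_of_le' hm
  simp only [isQuasiIso_iff_fwdDiff_iter_norm_sq_eq_zero, Nat.add_sub_cancel,
    isPolySeq_iff_fwdDiff_iter_eq_zero]
  constructor
  · intro h x
    have hx := h (indicatorConstLp 2 (measurableSet_singleton x) (hμ' x) (1 : ℂ))
    simp only [norm_pow_apply_indicatorConstLp_sq hμ0 hμ' hC] at hx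
    rw [fwdDiff_iter_const_mul, smul_eq_zero] at hx
    exact hx.resolve_left (ENNReal.toReal_ne_zero.mpr ⟨hμ0 x, hμ' x⟩)
  · intro h f
    funext n
    have hsum :=
      HasSum.fwdDiff_iter 1 (fun p => hasSum_norm_sq_mul_hRN hμ0 hμ' hC (p + k) f) (d + 1) n
    simp only [fwdDiff_iter_const_mul, h, smul_zero, Pi.zero_apply] at hsum
    exact hsum.unique hasSum_zero

theorem stmt2
    (X : Type*) [MeasurableSpace X] [Countable X] [Infinite X]
    (hmeas : ∀ s : Set X, MeasurableSet s)
    (φ : X → X)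
    (μ : Measure X) [SigmaFinite μ]
    (hμ : ∀ x : X, 0 < μ {x} ∧ μ {x} < ⊤)
    (hns : μ.map φ ≪ μ)
    (C : Lp ℂ 2 μ →L[ℂ] Lp ℂ 2 μ)
    (hC : ∀ f : Lp ℂ 2 μ, (C f : X → ℂ) =ᵐ[μ] fun x => f (φ x))
    (m k : ℕ) (hm : 1 ≤ m) :
    IsQuasiIso k m C ↔
      ∀ x : X, IsPolySeq (m - 1) (fun n => hRN μ φ (n + k) x) :=
  stmt2_general X hmeas φ μ hμ C hC m k hm
end
end

section
/- Let m ≥ 2 and k ≥ 0 be integers and suppose κ = 1. Assume that for every i ∈ J_{η_1} the sequence (μ({x^1_{i,k+j+1}}))_{j∈ℤ₊} is a polynomial in j of degree at most m−2, and that for at least one i ∈ J_{η_1} this sequence is a polynomial in j of degree exactly m−2. Then the composition operator C on L²(μ) is a strict k-quasi-m-isometry: C is k-quasi-m-isometric, but C is not k-quasi-n-isometric for any integer n with 1 ≤ n < m. -/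
/-!
Write `w_y(p) = μ(φ^{-p}{y})`. On the discrete space `‖Cᵖ f‖² = ∑_y |f y|² w_y(p)`, and
`⟪C*ᵏ Bₙ(C) Cᵏ f, f⟫` is the `n`-th forward difference at `0` of `p ↦ ‖C^{p+k} f‖²`; testing
with point masses, `C` is `k`-quasi-`n`-isometric iff `Δⁿ w_y(· + k)` vanishes at `0` for every
vertex `y`. For a branch vertex `x_{i,j}`, `w_y(· + k)` is a shift of the branch sequence
`γᵢ(t) = μ{x_{i,k+t+1}}`, while at the circuit vertex `x₁` (a fixed point of `φ` when `κ = 1`)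
the first difference of `w_{x₁}(· + k)` is `∑ᵢ γᵢ`. As each `γᵢ` is a polynomial of degree
`≤ m - 2`, all `m`-th differences vanish. For `n ≤ m - 2` the branch of exact degree `m - 2`
has a nonzero `n`-th difference, and for `n = m - 1` the difference at `x₁` is
`(m-2)! ∑ᵢ coeff_{m-2}(γᵢ) > 0`, because a polynomial positive on `ℕ` has nonnegative leading
coefficient.
-/

open MeasureTheory Finset

noncomputable section

/-- A real sequence is a polynomial in `n` of degree exactly `d`. -/
def IsPolySeqExact (d : ℕ) (γ : ℕ → ℝ) : Prop :=
  ∃ q : Polynomial ℝ, q.degree = (d : WithBot ℕ) ∧ ∀ n : ℕ, q.eval (n : ℝ) = γ n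

open scoped fwdDiff InnerProductSpace

section ForwardDifferences

theorem fwdDiff_iter_comp_natCast {R G : Type*} [AddCommMonoidWithOne R] [AddCommGroup G]
    (f : R → G) (n j : ℕ) :
    Δ_[1] ^[n] (fun i : ℕ => f i) j = Δ_[1] ^[n] f (j : R) := by
  simp [fwdDiff_iter_eq_sum_shift]

variable {M : Type*} [AddCommMonoid M] (h : M)

theorem fwdDiff_iter_eq_zero_of_le {G : Type*} [AddCommGroup G] {f : M → G} {n n' : ℕ}
    (hf : Δ_[h] ^[n] f = 0) (hn : n ≤ n') : Δ_[h] ^[n'] f = 0 := by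
  obtain ⟨l, rfl⟩ := Nat.exists_eq_add_of_le hn
  rw [add_comm, Function.iterate_add_apply, hf]
  exact Function.iterate_fixed (fwdDiff_const h 0) l

variable {ι : Type*} {γ : ι → M → ℝ}

theorem fwdDiff_iter_tsum (hγ : ∀ x, Summable fun i => γ i x) (n : ℕ) (x : M) :
    Δ_[h] ^[n] (fun y => ∑' i, γ i y) x = ∑' i, Δ_[h] ^[n] (γ i) x := by
  simp_rw [fwdDiff_iter_eq_sum_shift, zsmul_eq_mul, ← tsum_mul_left]
  exact (Summable.tsum_finsetSum fun k _ => (hγ _).mul_left _).symm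

theorem summable_fwdDiff_iter (hγ : ∀ x, Summable fun i => γ i x) (n : ℕ) (x : M) :
    Summable fun i => Δ_[h] ^[n] (γ i) x := by
  simp_rw [fwdDiff_iter_eq_sum_shift, zsmul_eq_mul]
  exact summable_sum fun k _ => (hγ _).mul_left _

end ForwardDifferences

section PolynomialSequences

open Polynomial

theorem Polynomial.fwdDiff_iter_eval_eq_factorial_mul_coeff {R : Type*} [CommRing R] {q : R[X]}
    {d : ℕ} (hq : q.natDegree ≤ d) (x : R) : Δ_[1] ^[d] q.eval x = d.factorial * q.coeff d := by
  rcases hq.lt_or_eq with hlt | rfl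
  · simp [fwdDiff_iter_eq_zero_of_degree_lt hlt, coeff_eq_zero_of_natDegree_lt hlt]
  · simp [fwdDiff_iter_degree_eq_factorial, mul_comm]

theorem Polynomial.coeff_nonneg_of_eval_natCast_pos {q : ℝ[X]} {d : ℕ} (hq : q.natDegree ≤ d)
    (hpos : ∀ j : ℕ, 0 < q.eval (j : ℝ)) : 0 ≤ q.coeff d := by
  rcases hq.lt_or_eq with hlt | rfl
  · rw [coeff_eq_zero_of_natDegree_lt hlt]
  by_contra! hneg
  rcases Nat.eq_zero_or_pos q.natDegree with h0 | h0
  · have h := hpos 0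
    rw [eq_C_of_natDegree_eq_zero h0, eval_C] at h
    rw [h0] at hneg
    linarith
  · obtain ⟨j, hj⟩ := (((tendsto_atBot_of_leadingCoeff_nonpos q
      (natDegree_pos_iff_degree_pos.mp h0) hneg.le).comp
      tendsto_natCast_atTop_atTop).eventually_lt_atBot 0).exists
    exact (hpos j).not_gt hj

variable {d : ℕ} {γ : ℕ → ℝ}

theorem IsPolySeq.fwdDiff_iter_eq_zero (h : IsPolySeq d γ) {n : ℕ} (hn : d < n) :
    Δ_[1] ^[n] γ = 0 := by
  obtain ⟨q, hq, hγ⟩ := h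
  obtain rfl : γ = fun j : ℕ => q.eval (j : ℝ) := funext fun j => (hγ j).symm
  ext j
  rw [fwdDiff_iter_comp_natCast (fun x : ℝ => q.eval x),
    fwdDiff_iter_eq_zero_of_degree_lt (hq.trans_lt hn)]
  rfl

theorem IsPolySeq.fwdDiff_iter_nonneg (h : IsPolySeq d γ) (hpos : ∀ j, 0 < γ j) (j : ℕ) :
    0 ≤ Δ_[1] ^[d] γ j := by
  obtain ⟨q, hq, hγ⟩ := h
  obtain rfl : γ = fun j : ℕ => q.eval (j : ℝ) := funext fun j => (hγ j).symm
  rw [fwdDiff_iter_comp_natCast (fun x : ℝ => q.eval x),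
    fwdDiff_iter_eval_eq_factorial_mul_coeff hq]
  exact mul_nonneg (by positivity) (coeff_nonneg_of_eval_natCast_pos hq hpos)

theorem IsPolySeqExact.fwdDiff_iter_pos (h : IsPolySeqExact d γ) (hpos : ∀ j, 0 < γ j)
    (j : ℕ) : 0 < Δ_[1] ^[d] γ j := by
  obtain ⟨q, hq, hγ⟩ := h
  obtain rfl : γ = fun j : ℕ => q.eval (j : ℝ) := funext fun j => (hγ j).symm
  have hd : q.natDegree ≤ d := natDegree_le_of_degree_le hq.le
  rw [fwdDiff_iter_comp_natCast (fun x : ℝ => q.eval x),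
    fwdDiff_iter_eval_eq_factorial_mul_coeff hd]
  exact mul_pos (by positivity) ((coeff_nonneg_of_eval_natCast_pos hd hpos).lt_of_ne
    (coeff_ne_zero_of_eq_degree hq).symm)

theorem IsPolySeqExact.exists_fwdDiff_iter_ne_zero (h : IsPolySeqExact d γ)
    (hpos : ∀ j, 0 < γ j) {n : ℕ} (hn : n ≤ d) : ∃ j, Δ_[1] ^[n] γ j ≠ 0 := by
  by_contra! hzero
  exact (h.fwdDiff_iter_pos hpos 0).ne'
    (congrFun (fwdDiff_iter_eq_zero_of_le 1 (funext hzero) hn) 0)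

end PolynomialSequences

section QuasiIsometry

variable {H : Type*} [NormedAddCommGroup H] [InnerProductSpace ℂ H] [CompleteSpace H]

open ContinuousLinearMap in
theorem inner_adjoint_pow_mul_BmOp_mul_pow_self (T : H →L[ℂ] H) (k n : ℕ) (f : H) :
    ⟪(adjoint T ^ k * BmOp n T * T ^ k) f, f⟫_ℂ =
      (Δ_[1] ^[n] (fun p => ‖(T ^ (p + k)) f‖ ^ 2) 0 : ℝ) := by
  have hpow (p : ℕ) : adjoint T ^ p = adjoint (T ^ p) := by
    rw [← star_eq_adjoint, ← star_eq_adjoint, star_pow]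
  rw [fwdDiff_iter_eq_sum_shift, ← sum_range_reflect, mul_apply_eq_comp,
    mul_apply_eq_comp, hpow, adjoint_inner_left, BmOp, _root_.sum_apply, sum_inner,
    Complex.ofReal_sum]
  refine sum_congr rfl fun j hj => ?_
  have hj : j ≤ n := Nat.lt_succ_iff.mp (mem_range.mp hj)
  rw [_root_.smul_apply, inner_smul_left, mul_apply_eq_comp, hpow, adjoint_inner_left,
    ← mul_apply_eq_comp, ← pow_add, inner_self_eq_norm_sq_to_K, Nat.add_sub_cancel,
    Nat.sub_sub_self hj, Nat.choose_symm hj]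
  simp

theorem isQuasiIso_iff_fwdDiff_norm_sq (T : H →L[ℂ] H) (k n : ℕ) :
    IsQuasiIso k n T ↔ ∀ f : H, Δ_[1] ^[n] (fun p => ‖(T ^ (p + k)) f‖ ^ 2) 0 = 0 := by
  rw [IsQuasiIso, ← ContinuousLinearMap.coe_inj, ContinuousLinearMap.toLinearMap_zero,
    ← inner_map_self_eq_zero]
  refine forall_congr' fun f => ?_
  rw [ContinuousLinearMap.coe_coe, inner_adjoint_pow_mul_BmOp_mul_pow_self,
    Complex.ofReal_eq_zero]

end QuasiIsometry

theorem Lp.enorm_sq_eq_lintegral {α E : Type*} [MeasurableSpace α] {μ : Measure α}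
    [NormedAddCommGroup E] (g : Lp E 2 μ) : ‖g‖ₑ ^ 2 = ∫⁻ x, ‖g x‖ₑ ^ 2 ∂μ := by
  simpa [Lp.enorm_def] using eLpNorm_nnreal_pow_eq_lintegral (f := g) (μ := μ) (p := 2) two_ne_zero

def IsCompositionOperator {X : Type*} [MeasurableSpace X] {μ : Measure X}
    (C : Lp ℂ 2 μ →L[ℂ] Lp ℂ 2 μ) (φ : X → X) : Prop :=
  ∀ f : Lp ℂ 2 μ, (C f : X → ℂ) =ᵐ[μ] fun x => f (φ x)

section DiscreteCompositionOperator

variable {X : Type*} [MeasurableSpace X] {μ : Measure X}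

theorem eq_of_ae_eq_of_measure_singleton_ne_zero {β : Type*} (hμ : ∀ x, μ {x} ≠ 0)
    {f g : X → β} (h : f =ᵐ[μ] g) : f = g := by
  rw [Filter.EventuallyEq, ae_eq_top.2 hμ, Filter.eventually_top] at h
  exact funext h

variable {φ : X → X} {C : Lp ℂ 2 μ →L[ℂ] Lp ℂ 2 μ}

theorem IsCompositionOperator.pow_apply (hC : IsCompositionOperator C φ)
    (hμ : ∀ x, μ {x} ≠ 0) (p : ℕ) (f : Lp ℂ 2 μ) (x : X) :
    ((C ^ p) f : X → ℂ) x = f (φ^[p] x) := by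
  induction p generalizing f x with
  | zero => rfl
  | succ p ih =>
    rw [pow_succ, mul_apply_eq_comp, ih, eq_of_ae_eq_of_measure_singleton_ne_zero hμ (hC f),
      Function.iterate_succ_apply']

variable [Countable X] [MeasurableSingletonClass X]

theorem lintegral_comp_eq_tsum (ψ : X → X) (g : X → ENNReal) :
    ∫⁻ x, g (ψ x) ∂μ = ∑' y, g y * μ (ψ ⁻¹' {y}) := by
  rw [← lintegral_map (measurable_of_countable g) (measurable_of_countable ψ),
    lintegral_countable']
  simp_rw [Measure.map_apply (measurable_of_countable ψ) (measurableSet_singleton _)]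

namespace IsCompositionOperator

variable (hC : IsCompositionOperator C φ) (hμ : ∀ x, μ {x} ≠ 0)
include hC hμ

theorem enorm_pow_apply_sq (p : ℕ) (f : Lp ℂ 2 μ) :
    ‖(C ^ p) f‖ₑ ^ 2 = ∑' y, ‖f y‖ₑ ^ 2 * μ (φ^[p] ⁻¹' {y}) := by
  simp_rw [Lp.enorm_sq_eq_lintegral, hC.pow_apply hμ]
  exact lintegral_comp_eq_tsum _ fun y => ‖f y‖ₑ ^ 2

theorem enorm_pow_apply_indicator_sq (p : ℕ) {y : X} (hy : μ {y} ≠ ⊤) :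
    ‖(C ^ p) (indicatorConstLp 2 (measurableSet_singleton y) hy (1 : ℂ))‖ₑ ^ 2 =
      μ (φ^[p] ⁻¹' {y}) := by
  rw [hC.enorm_pow_apply_sq hμ,
    eq_of_ae_eq_of_measure_singleton_ne_zero hμ indicatorConstLp_coeFn,
    tsum_eq_single y fun z hz => by simp [hz]]
  simp

theorem norm_pow_apply_indicator_sq (p : ℕ) {y : X} (hy : μ {y} ≠ ⊤) :
    ‖(C ^ p) (indicatorConstLp 2 (measurableSet_singleton y) hy (1 : ℂ))‖ ^ 2 =
      (μ (φ^[p] ⁻¹' {y})).toReal := by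
  rw [← hC.enorm_pow_apply_indicator_sq hμ p hy, ENNReal.toReal_pow, toReal_enorm]

theorem measure_preimage_iterate_ne_top (hfin : ∀ x, μ {x} ≠ ⊤) (p : ℕ) (y : X) :
    μ (φ^[p] ⁻¹' {y}) ≠ ⊤ := by
  rw [← hC.enorm_pow_apply_indicator_sq hμ p (hfin y)]
  exact ENNReal.pow_ne_top enorm_ne_top

theorem hasSum_norm_pow_apply_sq (p : ℕ) (f : Lp ℂ 2 μ) :
    HasSum (fun y => ‖f y‖ ^ 2 * (μ (φ^[p] ⁻¹' {y})).toReal) (‖(C ^ p) f‖ ^ 2) := by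
  have h := hC.enorm_pow_apply_sq hμ p f
  have hne : ∑' y, ‖f y‖ₑ ^ 2 * μ (φ^[p] ⁻¹' {y}) ≠ ⊤ := h ▸ ENNReal.pow_ne_top enorm_ne_top
  convert ENNReal.hasSum_toReal hne using 1
  · simp [ENNReal.toReal_mul]
  · rw [← ENNReal.tsum_toReal_eq (ENNReal.ne_top_of_tsum_ne_top hne), ← h, ENNReal.toReal_pow,
      toReal_enorm]

theorem isQuasiIso_iff_fwdDiff_measure_preimage (hfin : ∀ x, μ {x} ≠ ⊤) (k n : ℕ) :
    IsQuasiIso k n C ↔ ∀ y, Δ_[1] ^[n] (fun p => (μ (φ^[p + k] ⁻¹' {y})).toReal) 0 = 0 := by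
  rw [isQuasiIso_iff_fwdDiff_norm_sq]
  constructor
  · intro h y
    simpa only [hC.norm_pow_apply_indicator_sq hμ _ (hfin y)] using
      h (indicatorConstLp 2 (measurableSet_singleton y) (hfin y) 1)
  · intro h f
    have hs (p : ℕ) := hC.hasSum_norm_pow_apply_sq hμ (p + k) f
    simp_rw [← (hs _).tsum_eq]
    rw [fwdDiff_iter_tsum 1 (fun p => (hs p).summable)]
    refine (tsum_congr fun y => ?_).trans tsum_zero
    change Δ_[1] ^[n] (‖f y‖ ^ 2 • fun p => (μ (φ^[p + k] ⁻¹' {y})).toReal) 0 = 0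
    rw [fwdDiff_iter_const_smul, Pi.smul_apply, h y, smul_zero]

end IsCompositionOperator

end DiscreteCompositionOperator

/-- The graph of the theorem for `κ = 1`: the circuit is the fixed point `c`, and `b i j` is the
vertex `x¹_{i,j+1}`, so that branch indices start at `0`. -/
structure IsLoopWithBranches {X : Type*} (φ : X → X) (c : X) (b : ℕ → ℕ → X) (I : Set ℕ) :
    Prop where
  apply_center : φ c = c
  apply_branch_zero : ∀ i ∈ I, φ (b i 0) = c
  apply_branch_succ : ∀ i ∈ I, ∀ j, φ (b i (j + 1)) = b i j
  branch_ne_center : ∀ i ∈ I, ∀ j, b i j ≠ c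
  branch_injOn : ∀ i ∈ I, ∀ i' ∈ I, ∀ j j', b i j = b i' j' → i = i' ∧ j = j'
  eq_center_or_branch : ∀ x, x = c ∨ ∃ i ∈ I, ∃ j, x = b i j

namespace IsLoopWithBranches

variable {X : Type*} {φ : X → X} {c : X} {b : ℕ → ℕ → X} {I : Set ℕ}
  (hG : IsLoopWithBranches φ c b I)
include hG

theorem preimage_branch {i : ℕ} (hi : i ∈ I) (j : ℕ) : φ ⁻¹' {b i j} = {b i (j + 1)} := by
  ext x
  simp only [Set.mem_preimage, Set.mem_singleton_iff]
  refine ⟨fun hx => ?_, fun hx => hx ▸ hG.apply_branch_succ i hi j⟩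
  rcases hG.eq_center_or_branch x with rfl | ⟨i', hi', j', rfl⟩
  · exact absurd (hx.symm.trans hG.apply_center) (hG.branch_ne_center i hi j)
  rcases j' with _ | j'
  · exact absurd (hx.symm.trans (hG.apply_branch_zero i' hi')) (hG.branch_ne_center i hi j)
  obtain ⟨rfl, rfl⟩ :=
    hG.branch_injOn i' hi' i hi j' j ((hG.apply_branch_succ i' hi' j').symm.trans hx)
  rfl

theorem preimage_iterate_branch {i : ℕ} (hi : i ∈ I) (p j : ℕ) :
    φ^[p] ⁻¹' {b i j} = {b i (j + p)} := by
  induction p generalizing j with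
  | zero => rfl
  | succ p ih =>
    rw [Function.iterate_succ, Set.preimage_comp, ih, hG.preimage_branch hi, add_assoc]

theorem preimage_center : φ ⁻¹' {c} = {c} ∪ ⋃ i ∈ I, {b i 0} := by
  ext x
  simp only [Set.mem_preimage, Set.mem_singleton_iff, Set.mem_union, Set.mem_iUnion, exists_prop]
  refine ⟨fun hx => ?_, ?_⟩
  · rcases hG.eq_center_or_branch x with rfl | ⟨i, hi, j, rfl⟩
    · exact Or.inl rfl
    rcases j with _ | j
    · exact Or.inr ⟨i, hi, rfl⟩
    · exact absurd ((hG.apply_branch_succ i hi j).symm.trans hx) (hG.branch_ne_center i hi j)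
  · rintro (rfl | ⟨i, hi, rfl⟩)
    exacts [hG.apply_center, hG.apply_branch_zero i hi]

theorem preimage_iterate_succ_center (p : ℕ) :
    φ^[p + 1] ⁻¹' {c} = φ^[p] ⁻¹' {c} ∪ ⋃ i ∈ I, {b i p} := by
  rw [Function.iterate_succ', Set.preimage_comp, hG.preimage_center, Set.preimage_union,
    Set.preimage_iUnion₂]
  refine congrArg _ (Set.iUnion₂_congr fun i hi => ?_)
  rw [hG.preimage_iterate_branch hi, zero_add]

variable [MeasurableSpace X] {μ : Measure X}

theorem fwdDiff_measure_preimage_branch {i : ℕ} (hi : i ∈ I) (k n j : ℕ) :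
    Δ_[1] ^[n] (fun p => (μ (φ^[p + k] ⁻¹' {b i j})).toReal) 0 =
      Δ_[1] ^[n] (fun t => (μ {b i (k + t)}).toReal) j := by
  have h := fwdDiff_iter_comp_add 1 (fun t => (μ {b i (k + t)}).toReal) j n 0
  rw [zero_add] at h
  simp_rw [← h, hG.preimage_iterate_branch hi]
  congr! 4 with p
  rw [show j + (p + k) = k + (p + j) by ring]

variable [Countable X] [MeasurableSingletonClass X]

theorem measure_preimage_iterate_succ_center (p : ℕ) :
    μ (φ^[p + 1] ⁻¹' {c}) = μ (φ^[p] ⁻¹' {c}) + ∑' i : I, μ {b i p} := by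
  rw [hG.preimage_iterate_succ_center, measure_union ?_ (Set.to_countable _).measurableSet,
    measure_biUnion (Set.to_countable I) ?_ fun _ _ => measurableSet_singleton _]
  · intro i hi i' hi' hne
    exact Set.disjoint_singleton.2 fun h => hne (hG.branch_injOn i hi i' hi' p p h).1
  · rw [Set.disjoint_iUnion₂_right]
    intro i hi
    rw [Set.disjoint_singleton_right, Set.mem_preimage, Set.mem_singleton_iff]
    have : b i p ∈ φ^[p] ⁻¹' {b i 0} := by rw [hG.preimage_iterate_branch hi, zero_add]; rfl
    exact fun h => hG.branch_ne_center i hi 0 (this.symm.trans h)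

variable (hfin : ∀ p, μ (φ^[p] ⁻¹' {c}) ≠ ⊤)
include hfin

theorem tsum_measure_branch_ne_top (p : ℕ) : ∑' i : I, μ {b i p} ≠ ⊤ := by
  have h := hfin (p + 1)
  rw [hG.measure_preimage_iterate_succ_center] at h
  exact fun htop => h (by rw [htop, add_top])

theorem summable_toReal_measure_branch (p : ℕ) : Summable fun i : I => (μ {b i p}).toReal :=
  ENNReal.summable_toReal (hG.tsum_measure_branch_ne_top hfin p)

theorem fwdDiff_measure_preimage_center (k n : ℕ) :
    Δ_[1] ^[n + 1] (fun p => (μ (φ^[p + k] ⁻¹' {c})).toReal) 0 =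
      ∑' i : I, Δ_[1] ^[n] (fun t => (μ {b i (k + t)}).toReal) 0 := by
  have hΔ : Δ_[1] (fun p => (μ (φ^[p + k] ⁻¹' {c})).toReal) =
      fun t => ∑' i : I, (μ {b i (k + t)}).toReal := by
    funext t
    have hne := hG.tsum_measure_branch_ne_top hfin (k + t)
    rw [fwdDiff, show t + 1 + k = k + t + 1 by ring, hG.measure_preimage_iterate_succ_center,
      ENNReal.toReal_add (hfin _) hne, ENNReal.tsum_toReal_eq (ENNReal.ne_top_of_tsum_ne_top hne),
      add_comm k t, add_sub_cancel_left]
  rw [Function.iterate_succ_apply, hΔ,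
    fwdDiff_iter_tsum 1 fun t => hG.summable_toReal_measure_branch hfin _]

end IsLoopWithBranches

section StrictQuasiIsometry

variable {X : Type*} [MeasurableSpace X] [Countable X] [MeasurableSingletonClass X]
  {μ : Measure X} {φ : X → X} {C : Lp ℂ 2 μ →L[ℂ] Lp ℂ 2 μ} {c : X} {b : ℕ → ℕ → X}
  {I : Set ℕ} (hG : IsLoopWithBranches φ c b I) (hC : IsCompositionOperator C φ)
  (hμ : ∀ x, μ {x} ≠ 0) (hfin : ∀ x, μ {x} ≠ ⊤) {d k : ℕ}
  (hall : ∀ i ∈ I, IsPolySeq d fun t => (μ {b i (k + t)}).toReal)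
include hG hC hμ hfin hall

theorem IsLoopWithBranches.isQuasiIso_of_isPolySeq : IsQuasiIso k (d + 2) C := by
  have hfin_c (p : ℕ) := hC.measure_preimage_iterate_ne_top hμ hfin p c
  rw [hC.isQuasiIso_iff_fwdDiff_measure_preimage hμ hfin]
  intro y
  rcases hG.eq_center_or_branch y with rfl | ⟨i, hi, j, rfl⟩
  · rw [hG.fwdDiff_measure_preimage_center hfin_c]
    exact (tsum_congr fun i : I =>
      congrFun ((hall i i.2).fwdDiff_iter_eq_zero (by omega)) 0).trans tsum_zero
  · rw [hG.fwdDiff_measure_preimage_branch hi]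
    exact congrFun ((hall i hi).fwdDiff_iter_eq_zero (by omega)) j

theorem IsLoopWithBranches.not_isQuasiIso_of_isPolySeqExact
    (hex : ∃ i ∈ I, IsPolySeqExact d fun t => (μ {b i (k + t)}).toReal) {n : ℕ}
    (hn : n < d + 2) : ¬ IsQuasiIso k n C := by
  have hfin_c (p : ℕ) := hC.measure_preimage_iterate_ne_top hμ hfin p c
  have hpos (i t : ℕ) : 0 < (μ {b i (k + t)}).toReal := ENNReal.toReal_pos (hμ _) (hfin _)
  obtain ⟨i₀, hi₀, hex⟩ := hex
  rw [hC.isQuasiIso_iff_fwdDiff_measure_preimage hμ hfin]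
  intro h
  rcases Nat.lt_succ_iff_lt_or_eq.1 hn with hn | rfl
  · obtain ⟨j, hj⟩ := hex.exists_fwdDiff_iter_ne_zero (hpos i₀) (Nat.lt_succ_iff.1 hn)
    exact hj (hG.fwdDiff_measure_preimage_branch hi₀ k n j ▸ h (b i₀ j))
  · have hc := h c
    rw [hG.fwdDiff_measure_preimage_center hfin_c] at hc
    refine (Summable.tsum_pos ?_ (fun i : I => (hall i i.2).fwdDiff_iter_nonneg (hpos i) 0)
      ⟨i₀, hi₀⟩ (hex.fwdDiff_iter_pos (hpos i₀) 0)).ne' hc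
    exact summable_fwdDiff_iter 1 (fun t => hG.summable_toReal_measure_branch hfin_c _) d 0

end StrictQuasiIsometry

theorem stmt9_general
    (κ : ℕ)
    (Φ₂ : ℤ → ℕ)
    (hΦ₂ : ∀ q : ℤ, (1 ≤ Φ₂ q ∧ Φ₂ q ≤ κ) ∧ (κ : ℤ) ∣ q - (Φ₂ q : ℤ))
    (X : Type*) [MeasurableSpace X] [Countable X]
    (hmeas : ∀ s : Set X, MeasurableSet s)
    (η : ℕ → ℕ∞)
    (xc : ℕ → X) (xb : ℕ → ℕ → ℕ → X)
    (hinj₂ : ∀ r r' i j : ℕ, 1 ≤ r → r ≤ κ → 1 ≤ r' → r' ≤ κ → 1 ≤ i → (i : ℕ∞) ≤ η r' →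
      1 ≤ j → xc r ≠ xb r' i j)
    (hinj₃ : ∀ r i j r' i' j' : ℕ, 1 ≤ r → r ≤ κ → 1 ≤ i → (i : ℕ∞) ≤ η r → 1 ≤ j →
      1 ≤ r' → r' ≤ κ → 1 ≤ i' → (i' : ℕ∞) ≤ η r' → 1 ≤ j' →
      xb r i j = xb r' i' j' → r = r' ∧ i = i' ∧ j = j')
    (hsurj : ∀ x : X, (∃ r : ℕ, 1 ≤ r ∧ r ≤ κ ∧ x = xc r) ∨
      ∃ r i j : ℕ, 1 ≤ r ∧ r ≤ κ ∧ 1 ≤ i ∧ (i : ℕ∞) ≤ η r ∧ 1 ≤ j ∧ x = xb r i j)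
    (φ : X → X)
    (hφ₁ : ∀ r i j : ℕ, 1 ≤ r → r ≤ κ → 1 ≤ i → (i : ℕ∞) ≤ η r → 1 ≤ j →
      φ (xb r i (j + 1)) = xb r i j)
    (hφ₂ : ∀ r i : ℕ, 1 ≤ r → r ≤ κ → 1 ≤ i → (i : ℕ∞) ≤ η r → φ (xb r i 1) = xc r)
    (hφ₃ : ∀ r : ℕ, 1 ≤ r → r ≤ κ → φ (xc (Φ₂ ((r : ℤ) + 1))) = xc r)
    (μ : Measure X)
    (hμ : ∀ x : X, 0 < μ {x} ∧ μ {x} < ⊤)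
    (C : Lp ℂ 2 μ →L[ℂ] Lp ℂ 2 μ)
    (hC : ∀ f : Lp ℂ 2 μ, (C f : X → ℂ) =ᵐ[μ] fun x => f (φ x))
    (m k : ℕ) (hm : 2 ≤ m) (hκ₁ : κ = 1)
    (hall : ∀ i : ℕ, 1 ≤ i → (i : ℕ∞) ≤ η 1 →
      IsPolySeq (m - 2) (fun j => (μ {xb 1 i (k + j + 1)}).toReal))
    (hex : ∃ i : ℕ, 1 ≤ i ∧ (i : ℕ∞) ≤ η 1 ∧
      IsPolySeqExact (m - 2) (fun j => (μ {xb 1 i (k + j + 1)}).toReal)) :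
    IsQuasiIso k m C ∧ ∀ n : ℕ, 1 ≤ n → n < m → ¬ IsQuasiIso k n C := by
  subst hκ₁
  have : MeasurableSingletonClass X := ⟨fun x => hmeas {x}⟩
  have hΦ : Φ₂ 2 = 1 := le_antisymm (hΦ₂ 2).1.2 (hΦ₂ 2).1.1
  have hG : IsLoopWithBranches φ (xc 1) (fun i j => xb 1 i (j + 1))
      {i : ℕ | 1 ≤ i ∧ (i : ℕ∞) ≤ η 1} :=
    { apply_center := by simpa [hΦ] using hφ₃ 1 le_rfl le_rfl
      apply_branch_zero := fun i hi => hφ₂ 1 i le_rfl le_rfl hi.1 hi.2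
      apply_branch_succ := fun i hi j => hφ₁ 1 i (j + 1) le_rfl le_rfl hi.1 hi.2 (by omega)
      branch_ne_center := fun i hi j =>
        (hinj₂ 1 1 i (j + 1) le_rfl le_rfl le_rfl le_rfl hi.1 hi.2 (by omega)).symm
      branch_injOn := fun i hi i' hi' j j' h => by
        obtain ⟨-, rfl, hj⟩ := hinj₃ 1 i (j + 1) 1 i' (j' + 1) le_rfl le_rfl hi.1 hi.2 (by omega)
          le_rfl le_rfl hi'.1 hi'.2 (by omega) h
        exact ⟨rfl, by omega⟩
      eq_center_or_branch := fun x => by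
        rcases hsurj x with ⟨r, h1, h2, rfl⟩ | ⟨r, i, j, h1, h2, hi1, hi2, hj, rfl⟩
        · obtain rfl : r = 1 := by omega
          exact Or.inl rfl
        · obtain rfl : r = 1 := by omega
          exact Or.inr ⟨i, ⟨hi1, hi2⟩, j - 1, by rw [Nat.sub_add_cancel hj]⟩ }
  obtain ⟨d, rfl⟩ : ∃ d, m = d + 2 := ⟨m - 2, by omega⟩
  simp only [Nat.add_sub_cancel] at hall hex
  obtain ⟨i₀, hi₀, hi₀', hex⟩ := hex
  have hμ₀ (x : X) : μ {x} ≠ 0 := (hμ x).1.ne'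
  have hfin (x : X) : μ {x} ≠ ⊤ := (hμ x).2.ne
  have hall' := fun i (hi : i ∈ {i : ℕ | 1 ≤ i ∧ (i : ℕ∞) ≤ η 1}) => hall i hi.1 hi.2
  exact ⟨hG.isQuasiIso_of_isPolySeq hC hμ₀ hfin hall', fun n _ hn =>
    hG.not_isQuasiIso_of_isPolySeqExact hC hμ₀ hfin hall' ⟨i₀, ⟨hi₀, hi₀'⟩, hex⟩ hn⟩

theorem stmt9
    (κ : ℕ) (hκ : 1 ≤ κ)
    (Φ₂ : ℤ → ℕ)
    (hΦ₂ : ∀ q : ℤ, (1 ≤ Φ₂ q ∧ Φ₂ q ≤ κ) ∧ (κ : ℤ) ∣ q - (Φ₂ q : ℤ))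
    (X : Type*) [MeasurableSpace X] [Countable X]
    (hmeas : ∀ s : Set X, MeasurableSet s)
    (η : ℕ → ℕ∞)
    (hη : ∃ r : ℕ, 1 ≤ r ∧ r ≤ κ ∧ η r ≠ 0)
    (xc : ℕ → X) (xb : ℕ → ℕ → ℕ → X)
    (hinj₁ : ∀ r r' : ℕ, 1 ≤ r → r ≤ κ → 1 ≤ r' → r' ≤ κ → xc r = xc r' → r = r')
    (hinj₂ : ∀ r r' i j : ℕ, 1 ≤ r → r ≤ κ → 1 ≤ r' → r' ≤ κ → 1 ≤ i → (i : ℕ∞) ≤ η r' →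
      1 ≤ j → xc r ≠ xb r' i j)
    (hinj₃ : ∀ r i j r' i' j' : ℕ, 1 ≤ r → r ≤ κ → 1 ≤ i → (i : ℕ∞) ≤ η r → 1 ≤ j →
      1 ≤ r' → r' ≤ κ → 1 ≤ i' → (i' : ℕ∞) ≤ η r' → 1 ≤ j' →
      xb r i j = xb r' i' j' → r = r' ∧ i = i' ∧ j = j')
    (hsurj : ∀ x : X, (∃ r : ℕ, 1 ≤ r ∧ r ≤ κ ∧ x = xc r) ∨
      ∃ r i j : ℕ, 1 ≤ r ∧ r ≤ κ ∧ 1 ≤ i ∧ (i : ℕ∞) ≤ η r ∧ 1 ≤ j ∧ x = xb r i j)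
    (φ : X → X)
    (hφ₁ : ∀ r i j : ℕ, 1 ≤ r → r ≤ κ → 1 ≤ i → (i : ℕ∞) ≤ η r → 1 ≤ j →
      φ (xb r i (j + 1)) = xb r i j)
    (hφ₂ : ∀ r i : ℕ, 1 ≤ r → r ≤ κ → 1 ≤ i → (i : ℕ∞) ≤ η r → φ (xb r i 1) = xc r)
    (hφ₃ : ∀ r : ℕ, 1 ≤ r → r ≤ κ → φ (xc (Φ₂ ((r : ℤ) + 1))) = xc r)
    (μ : Measure X) [SigmaFinite μ]
    (hμ : ∀ x : X, 0 < μ {x} ∧ μ {x} < ⊤)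
    (C : Lp ℂ 2 μ →L[ℂ] Lp ℂ 2 μ)
    (hC : ∀ f : Lp ℂ 2 μ, (C f : X → ℂ) =ᵐ[μ] fun x => f (φ x))
    (m k : ℕ) (hm : 2 ≤ m) (hκ₁ : κ = 1)
    (hall : ∀ i : ℕ, 1 ≤ i → (i : ℕ∞) ≤ η 1 →
      IsPolySeq (m - 2) (fun j => (μ {xb 1 i (k + j + 1)}).toReal))
    (hex : ∃ i : ℕ, 1 ≤ i ∧ (i : ℕ∞) ≤ η 1 ∧
      IsPolySeqExact (m - 2) (fun j => (μ {xb 1 i (k + j + 1)}).toReal)) :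
    IsQuasiIso k m C ∧ ∀ n : ℕ, 1 ≤ n → n < m → ¬ IsQuasiIso k n C :=
  stmt9_general κ Φ₂ hΦ₂ X hmeas η xc xb hinj₂ hinj₃ hsurj φ hφ₁ hφ₂ hφ₃ μ hμ C hC m k hm hκ₁ hall
    hex
end
end
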